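/- Every complex zero of the entire function g(z) = sin(z) - z·cos(z) is real. -/

import Mathlib

/-!
Multiplying `sin z = z cos z` by `conj (cos z)` and writing `z = x + y I`,
`D = ‖cos z‖² = cos² x + sinh² y` gives `sin x cos x = x D` and `sinh y cosh y = y D`.
If `y ≠ 0`, then `|sinh y| > |y|` and `cosh y ≥ 1` force `D > 1`; since `|sin x cos x| ≤ |x|`,
this forces `x = 0`. But on the imaginary axis the equation reads `tanh y = y`, which has no
nonzero solution.
-/

open Complex ComplexConjugate

namespace Real

lemma abs_lt_abs_sinh {t : ℝ} (ht : t ≠ 0) : |t| < |sinh t| := by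
  rw [abs_sinh]
  exact self_lt_sinh_iff.2 (abs_pos.2 ht)

lemma sinh_lt_mul_cosh {t : ℝ} (ht : 0 < t) : sinh t < t * cosh t := by
  have hmono : StrictMonoOn (fun s ↦ s * cosh s - sinh s) (Set.Ici 0) := by
    refine strictMonoOn_of_deriv_pos (convex_Ici 0) (by fun_prop) fun s hs ↦ ?_
    rw [interior_Ici, Set.mem_Ioi] at hs
    have hderiv : HasDerivAt (fun s ↦ s * cosh s - sinh s) (s * sinh s) s :=
      (((hasDerivAt_id s).mul (hasDerivAt_cosh s)).sub (hasDerivAt_sinh s)).congr_deriv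
        (by simp only [id_eq]; ring)
    rw [hderiv.deriv]
    exact mul_pos hs (sinh_pos_iff.2 hs)
  simpa using hmono Set.self_mem_Ici ht.le ht

lemma sinh_ne_mul_cosh {t : ℝ} (ht : t ≠ 0) : sinh t ≠ t * cosh t := by
  rcases ht.lt_or_gt with ht | ht
  · have := sinh_lt_mul_cosh (neg_pos.2 ht)
    rw [sinh_neg, cosh_neg] at this
    intro heq
    linarith
  · exact (sinh_lt_mul_cosh ht).ne

end Real

namespace Complex

lemma sin_mul_conj_cos (z : ℂ) :
    sin z * conj (cos z) =
      ↑(Real.sin z.re * Real.cos z.re) + ↑(Real.sinh z.im * Real.cosh z.im) * I := by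
  rw [sin_eq z, cos_eq z, ← ofReal_sin, ← ofReal_cos, ← ofReal_sinh, ← ofReal_cosh]
  apply Complex.ext <;>
    simp only [map_sub, map_mul, conj_ofReal, conj_I, add_re, add_im, sub_re, sub_im, mul_re,
      mul_im, neg_re, neg_im, ofReal_re, ofReal_im, I_re, I_im]
  · linear_combination (Real.sin z.re * Real.cos z.re) * Real.cosh_sq z.im
  · linear_combination (Real.sinh z.im * Real.cosh z.im) * Real.sin_sq_add_cos_sq z.re

lemma normSq_cos (z : ℂ) : normSq (cos z) = Real.cos z.re ^ 2 + Real.sinh z.im ^ 2 := by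
  rw [cos_eq z, ← ofReal_sin, ← ofReal_cos, ← ofReal_sinh, ← ofReal_cosh, normSq_apply]
  simp only [sub_re, sub_im, mul_re, mul_im, ofReal_re, ofReal_im, I_re, I_im]
  linear_combination Real.cos z.re ^ 2 * Real.cosh_sq z.im +
    Real.sinh z.im ^ 2 * Real.sin_sq_add_cos_sq z.re

section SinEqMulCos

variable {z : ℂ}

lemma re_im_eq_mul_normSq_cos_of_sin_eq_mul_cos (h : sin z = z * cos z) :
    Real.sin z.re * Real.cos z.re = z.re * normSq (cos z) ∧
      Real.sinh z.im * Real.cosh z.im = z.im * normSq (cos z) := by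
  have key : sin z * conj (cos z) = z * normSq (cos z) := by rw [h, mul_assoc, mul_conj]
  rw [sin_mul_conj_cos] at key
  constructor
  · simpa [sin_ofReal_re, cos_ofReal_re] using congrArg re key
  · simpa [sinh_ofReal_re, cosh_ofReal_re] using congrArg im key

lemma one_lt_normSq_cos_of_sin_eq_mul_cos (h : sin z = z * cos z) (hy : z.im ≠ 0) :
    1 < normSq (cos z) := by
  have e := congrArg abs (re_im_eq_mul_normSq_cos_of_sin_eq_mul_cos h).2
  rw [abs_mul, abs_mul, abs_of_pos (Real.cosh_pos _), abs_of_nonneg (normSq_nonneg _)] at e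
  refine lt_of_mul_lt_mul_left ?_ (abs_nonneg z.im)
  calc |z.im| * 1 < |Real.sinh z.im| * 1 := by gcongr; exact Real.abs_lt_abs_sinh hy
    _ ≤ |Real.sinh z.im| * Real.cosh z.im := by gcongr; exact Real.one_le_cosh _
    _ = |z.im| * normSq (cos z) := e

lemma re_eq_zero_of_sin_eq_mul_cos (h : sin z = z * cos z) (hD : 1 < normSq (cos z)) :
    z.re = 0 := by
  have e := congrArg abs (re_im_eq_mul_normSq_cos_of_sin_eq_mul_cos h).1
  rw [abs_mul, abs_mul, abs_of_nonneg (normSq_nonneg _)] at e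
  by_contra hx
  have : |z.re| * normSq (cos z) ≤ |z.re| * 1 := by
    rw [← e]
    exact mul_le_mul Real.abs_sin_le_abs (Real.abs_cos_le_one _) (abs_nonneg _) (abs_nonneg _)
  exact (mul_lt_mul_of_pos_left hD (abs_pos.2 hx)).not_ge this

lemma sinh_im_eq_mul_cosh_of_sin_eq_mul_cos (h : sin z = z * cos z) (hx : z.re = 0) :
    Real.sinh z.im = z.im * Real.cosh z.im := by
  have hz : z = z.im * I := by simpa [hx] using (re_add_im z).symm
  rw [hz, sin_mul_I, cos_mul_I] at h
  have : (Real.sinh z.im : ℂ) = z.im * Real.cosh z.im := by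
    push_cast
    exact mul_right_cancel₀ I_ne_zero (h.trans (by ring))
  exact_mod_cast this

end SinEqMulCos

end Complex

theorem stmt10 (z : ℂ) (h : Complex.sin z - z * Complex.cos z = 0) : z.im = 0 := by
  have h' := sub_eq_zero.1 h
  by_contra hy
  have hx := re_eq_zero_of_sin_eq_mul_cos h' (one_lt_normSq_cos_of_sin_eq_mul_cos h' hy)
  exact Real.sinh_ne_mul_cosh hy (sinh_im_eq_mul_cosh_of_sin_eq_mul_cos h' hx)
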